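/- For finite information structures u, v on K × C × D with |C|, |D| ≤ L, sup over payoff functions g with action sets of cardinality ≤ L of (val(v,g) - val(u,g)) equals min over garblings q₁ : C → Δ(C), q₂ : D → Δ(D) of ‖q₁.u - v.q₂‖₁, where (q₁.u)(k,c,d) = Σ_{c'} u(k,c',d) q₁(c|c') and (v.q₂)(k,c,d) = Σ_{d'} v(k,c,d') q₂(d|d'). -/

import Mathlib

open scoped BigOperators

noncomputable section

/-- A probability distribution on a finite type, given as a nonnegative function summing to 1. -/
def IsDist {α : Type*} [Fintype α] (u : α → ℝ) : Prop :=
  (∀ a, 0 ≤ u a) ∧ ∑ a, u a = 1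

/-- A garbling (stochastic map / behavioral strategy). -/
def IsKernel {α β : Type*} [Fintype β] (q : α → β → ℝ) : Prop :=
  ∀ a, IsDist (q a)

/-- Expected payoff in the zero-sum Bayesian game `Γ(u,g)` when players use
behavioral strategies `σ` and `τ`. -/
def pay {K C D I J : Type*} [Fintype K] [Fintype C] [Fintype D] [Fintype I] [Fintype J]
    (u : K × C × D → ℝ) (g : K → I → J → ℝ) (σ : C → I → ℝ) (τ : D → J → ℝ) : ℝ :=
  ∑ k, ∑ c, ∑ d, ∑ i, ∑ j, u (k, c, d) * σ c i * τ d j * g k i j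

/-- The value (maxmin) of the zero-sum Bayesian game `Γ(u,g)`, player 1 maximizing. -/
def gameVal {K C D I J : Type*} [Fintype K] [Fintype C] [Fintype D] [Fintype I] [Fintype J]
    (u : K × C × D → ℝ) (g : K → I → J → ℝ) : ℝ :=
  sSup {x : ℝ | ∃ σ : C → I → ℝ, IsKernel σ ∧
    x = sInf {y : ℝ | ∃ τ : D → J → ℝ, IsKernel τ ∧ y = pay u g σ τ}}

/-- Garbling of player 1's signal: `(q.u)(k,c,d) = ∑ c', u(k,c',d) q(c|c')`. -/
def garbleL {K C C' D : Type*} [Fintype C] (q : C → C' → ℝ) (u : K × C × D → ℝ) :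
    K × C' × D → ℝ :=
  fun x => ∑ c, u (x.1, c, x.2.2) * q c x.2.1

/-- Garbling of player 2's signal: `(u.q)(k,c,d) = ∑ d', u(k,c,d') q(d|d')`. -/
def garbleR {K C D D' : Type*} [Fintype D] (q : D → D' → ℝ) (u : K × C × D → ℝ) :
    K × C × D' → ℝ :=
  fun x => ∑ d, u (x.1, x.2.1, d) * q d x.2.2

/-- ℓ¹ distance. -/
def l1 {α : Type*} [Fintype α] (u v : α → ℝ) : ℝ := ∑ a, |u a - v a|

/-- Payoff functions bounded by 1. -/
def Bounded1 {K I J : Type*} (g : K → I → J → ℝ) : Prop := ∀ k i j, |g k i j| ≤ 1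

/-- The value-based distance: sup over all finite zero-sum games (with nonempty
finite action sets, payoffs bounded by 1) of the absolute difference of values. -/
def valueDist {K C D C' D' : Type*} [Fintype K] [Fintype C] [Fintype D] [Fintype C'] [Fintype D']
    (u : K × C × D → ℝ) (v : K × C' × D' → ℝ) : ℝ :=
  sSup {x : ℝ | ∃ (m n : ℕ) (g : K → Fin (m + 1) → Fin (n + 1) → ℝ),
    Bounded1 g ∧ x = |gameVal u g - gameVal v g|}

/-- Value of a single-agent decision problem on a single-agent information structure. -/
def val1 {K C I : Type*} [Fintype K] [Fintype C] [Fintype I] [Nonempty I]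
    (u : K × C → ℝ) (g : K → I → ℝ) : ℝ :=
  ∑ c, ⨆ i, ∑ k, u (k, c) * g k i

/-- The single-agent value-based distance. -/
def valueDist1 {K C C' : Type*} [Fintype K] [Fintype C] [Fintype C']
    (u : K × C → ℝ) (v : K × C' → ℝ) : ℝ :=
  sSup {x : ℝ | ∃ (m : ℕ) (g : K → Fin (m + 1) → ℝ),
    (∀ k i, |g k i| ≤ 1) ∧ x = |val1 u g - val1 v g|}

/-- Garbling of the signal in a single-agent structure. -/
def garble1 {K C C' : Type*} [Fintype C] (q : C → C' → ℝ) (u : K × C → ℝ) : K × C' → ℝ :=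
  fun x => ∑ c, u (x.1, c) * q c x.2

end

/-!
Garbling player 1's signal can only hurt him, garbling player 2's signal can only help player 1,
and for payoffs bounded by 1 the value is 1-Lipschitz in the information structure for the ℓ¹
distance. Hence `val(v,g) - val(u,g) ≤ ‖q₁.u - v.q₂‖₁` for all garblings `q₁`, `q₂`.

Conversely, the differences `q₁.u - v.q₂` form a compact convex set; let `α` be its ℓ¹ distance
to `0`. Separating it from the open ℓ¹ ball of radius `α` (Hahn–Banach) gives a test function
`φ` with `|φ| ≤ 1` and `α ≤ ⟨φ, q₁.u - v.q₂⟩` for all `q₁`, `q₂`. In the game whose actions are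
signals and whose payoff is `-φ`, both players' best replies to a truthful opponent are
deterministic garblings, and this yields `α ≤ val(v,g) - val(u,g)`.
-/

open Finset

section Distribution

variable {ι : Type*} [Fintype ι] {p a : ι → ℝ} {B : ℝ}

theorem IsDist.sum_mul_le (hp : IsDist p) (h : ∀ i, a i ≤ B) : ∑ i, p i * a i ≤ B :=
  calc ∑ i, p i * a i ≤ ∑ i, p i * B :=
        sum_le_sum fun i _ => mul_le_mul_of_nonneg_left (h i) (hp.1 i)
    _ = B := by rw [← sum_mul, hp.2, one_mul]

theorem IsDist.le_sum_mul (hp : IsDist p) (h : ∀ i, B ≤ a i) : B ≤ ∑ i, p i * a i := by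
  simpa [sum_neg_distrib] using hp.sum_mul_le (a := fun i => -a i) fun i => neg_le_neg (h i)

theorem IsDist.abs_sum_mul_le (hp : IsDist p) (h : ∀ i, |a i| ≤ B) : |∑ i, p i * a i| ≤ B :=
  abs_le.mpr ⟨hp.le_sum_mul fun i => (abs_le.mp (h i)).1,
    hp.sum_mul_le fun i => (abs_le.mp (h i)).2⟩

theorem IsDist.nonempty {u : ι → ℝ} (hu : IsDist u) : Nonempty ι := by
  by_contra h
  rw [not_nonempty_iff] at h
  simpa using hu.2

end Distribution

def pureKernel {α β : Type*} [DecidableEq β] (f : α → β) : α → β → ℝ :=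
  fun a b => if b = f a then 1 else 0

theorem sum_pureKernel_mul {α β : Type*} [Fintype β] [DecidableEq β] (f : α → β) (a : α)
    (x : β → ℝ) : ∑ b, pureKernel f a b * x b = x (f a) := by
  simp [pureKernel]

theorem isKernel_pureKernel {α β : Type*} [Fintype β] [DecidableEq β] (f : α → β) :
    IsKernel (pureKernel f) := fun a =>
  ⟨fun b => by unfold pureKernel; split_ifs <;> norm_num, by simpa using sum_pureKernel_mul f a 1⟩

theorem IsKernel.comp {α β γ : Type*} [Fintype β] [Fintype γ] {q : α → β → ℝ} {σ : β → γ → ℝ}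
    (hq : IsKernel q) (hσ : IsKernel σ) : IsKernel fun a c => ∑ b, q a b * σ b c := fun a =>
  ⟨fun c => sum_nonneg fun b _ => mul_nonneg ((hq a).1 b) ((hσ b).1 c), by
    rw [sum_comm]; simp [← mul_sum, (hσ _).2, (hq a).2]⟩

theorem setOf_isKernel_eq_pi (α β : Type*) [Fintype β] :
    {q : α → β → ℝ | IsKernel q} = Set.univ.pi fun _ => stdSimplex ℝ β := by
  ext q
  simp [IsKernel, IsDist, stdSimplex]

theorem isCompact_setOf_isKernel (α β : Type*) [Fintype β] :
    IsCompact {q : α → β → ℝ | IsKernel q} := by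
  rw [setOf_isKernel_eq_pi]
  exact isCompact_univ_pi fun _ => isCompact_stdSimplex ℝ β

theorem convex_setOf_isKernel (α β : Type*) [Fintype β] :
    Convex ℝ {q : α → β → ℝ | IsKernel q} := by
  rw [setOf_isKernel_eq_pi]
  exact convex_pi fun _ _ => convex_stdSimplex ℝ β

section Payoff

variable {K C D C' D' I J : Type*} [Fintype K] [Fintype C] [Fintype D] [Fintype I] [Fintype J]
  {g : K → I → J → ℝ} {σ : C → I → ℝ} {τ : D → J → ℝ}

theorem pay_eq_sum_mul (u : K × C × D → ℝ) (g : K → I → J → ℝ) (σ : C → I → ℝ)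
    (τ : D → J → ℝ) :
    pay u g σ τ = ∑ s : K × C × D, u s * ∑ i, σ s.2.1 i * ∑ j, τ s.2.2 j * g s.1 i j := by
  simp only [pay, Fintype.sum_prod_type, mul_sum, mul_assoc]

theorem pay_eq_sum_sum_mul_left (u : K × C × D → ℝ) (g : K → I → J → ℝ) (σ : C → I → ℝ)
    (τ : D → J → ℝ) :
    pay u g σ τ = ∑ c, ∑ i, σ c i * ∑ k, ∑ d, ∑ j, u (k, c, d) * τ d j * g k i j := by
  simp only [pay, mul_sum, ← Fintype.sum_prod_type']
  exact Fintype.sum_equiv ⟨fun x => (x.2.1, x.2.2.2.1, x.1, x.2.2.1, x.2.2.2.2),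
    fun y => (y.2.2.1, y.1, y.2.2.2.1, y.2.1, y.2.2.2.2), fun _ => rfl, fun _ => rfl⟩ _ _
    fun _ => by simp only [Equiv.coe_fn_mk]; ring

theorem pay_eq_sum_sum_mul_right (u : K × C × D → ℝ) (g : K → I → J → ℝ) (σ : C → I → ℝ)
    (τ : D → J → ℝ) :
    pay u g σ τ = ∑ d, ∑ j, τ d j * ∑ k, ∑ c, ∑ i, u (k, c, d) * σ c i * g k i j := by
  simp only [pay, mul_sum, ← Fintype.sum_prod_type']
  exact Fintype.sum_equiv ⟨fun x => (x.2.2.1, x.2.2.2.2, x.1, x.2.1, x.2.2.2.1),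
    fun y => (y.2.2.1, y.2.2.2.1, y.1, y.2.2.2.2, y.2.1), fun _ => rfl, fun _ => rfl⟩ _ _
    fun _ => by simp only [Equiv.coe_fn_mk]; ring

theorem pay_sub (u w : K × C × D → ℝ) (g : K → I → J → ℝ) (σ : C → I → ℝ) (τ : D → J → ℝ) :
    pay (u - w) g σ τ = pay u g σ τ - pay w g σ τ := by
  simp [pay, sub_mul, sum_sub_distrib]

theorem abs_pay_le (u : K × C × D → ℝ) (hg : Bounded1 g) (hσ : IsKernel σ) (hτ : IsKernel τ) :
    |pay u g σ τ| ≤ ∑ s, |u s| := by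
  rw [pay_eq_sum_mul]
  refine (abs_sum_le_sum_abs _ _).trans (sum_le_sum fun s _ => ?_)
  rw [abs_mul]
  exact mul_le_of_le_one_right (abs_nonneg _)
    ((hσ _).abs_sum_mul_le fun i => (hτ _).abs_sum_mul_le fun j => hg _ i j)

theorem pay_sub_pay_le_l1 (u w : K × C × D → ℝ) (hg : Bounded1 g) (hσ : IsKernel σ)
    (hτ : IsKernel τ) : pay u g σ τ - pay w g σ τ ≤ l1 u w := by
  rw [← pay_sub]
  exact (le_abs_self _).trans (abs_pay_le _ hg hσ hτ)

theorem pay_garbleL [Fintype C'] (q : C → C' → ℝ) (u : K × C × D → ℝ) (g : K → I → J → ℝ)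
    (σ : C' → I → ℝ) (τ : D → J → ℝ) :
    pay (garbleL q u) g σ τ = pay u g (fun c i => ∑ c', q c c' * σ c' i) τ := by
  simp only [pay, garbleL, mul_sum, sum_mul, ← Fintype.sum_prod_type']
  exact Fintype.sum_equiv ⟨fun x => (x.1, x.2.2.2.2.2, x.2.2.1, x.2.2.2.1, x.2.2.2.2.1, x.2.1),
    fun y => (y.1, y.2.2.2.2.2, y.2.2.1, y.2.2.2.1, y.2.2.2.2.1, y.2.1), fun _ => rfl,
    fun _ => rfl⟩ _ _ fun _ => by simp only [Equiv.coe_fn_mk]; ring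

theorem pay_garbleR [Fintype D'] (q : D → D' → ℝ) (u : K × C × D → ℝ) (g : K → I → J → ℝ)
    (σ : C → I → ℝ) (τ : D' → J → ℝ) :
    pay (garbleR q u) g σ τ = pay u g σ (fun d j => ∑ d', q d d' * τ d' j) := by
  simp only [pay, garbleR, mul_sum, sum_mul, ← Fintype.sum_prod_type']
  exact Fintype.sum_equiv ⟨fun x => (x.1, x.2.1, x.2.2.2.2.2, x.2.2.2.1, x.2.2.2.2.1, x.2.2.1),
    fun y => (y.1, y.2.1, y.2.2.2.2.2, y.2.2.2.1, y.2.2.2.2.1, y.2.2.1), fun _ => rfl,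
    fun _ => rfl⟩ _ _ fun _ => by simp only [Equiv.coe_fn_mk]; ring

end Payoff

section Value

variable {K C D C' D' I J : Type*} [Fintype K] [Fintype C] [Fintype D] [Fintype I] [Fintype J]
  {g : K → I → J → ℝ} {σ : C → I → ℝ} {τ : D → J → ℝ}

noncomputable def guarantee (u : K × C × D → ℝ) (g : K → I → J → ℝ) (σ : C → I → ℝ) : ℝ :=
  sInf {y : ℝ | ∃ τ : D → J → ℝ, IsKernel τ ∧ y = pay u g σ τ}

theorem guarantee_le_pay (u : K × C × D → ℝ) (hg : Bounded1 g) (hσ : IsKernel σ)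
    (hτ : IsKernel τ) : guarantee u g σ ≤ pay u g σ τ := by
  refine csInf_le ⟨-∑ s, |u s|, ?_⟩ ⟨τ, hτ, rfl⟩
  rintro _ ⟨τ', hτ', rfl⟩
  exact neg_le_of_abs_le (abs_pay_le u hg hσ hτ')

theorem le_guarantee [Nonempty J] {u : K × C × D → ℝ} {b : ℝ}
    (h : ∀ τ : D → J → ℝ, IsKernel τ → b ≤ pay u g σ τ) : b ≤ guarantee u g σ := by
  classical
  refine le_csInf ⟨_, _, isKernel_pureKernel fun _ => Classical.arbitrary J, rfl⟩ ?_
  rintro _ ⟨τ, hτ, rfl⟩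
  exact h τ hτ

theorem guarantee_le_gameVal [Nonempty J] (u : K × C × D → ℝ) (hg : Bounded1 g)
    (hσ : IsKernel σ) : guarantee u g σ ≤ gameVal u g := by
  classical
  have hτ := isKernel_pureKernel (β := J) fun (_ : D) => Classical.arbitrary J
  refine le_csSup ⟨∑ s, |u s|, ?_⟩ ⟨σ, hσ, rfl⟩
  rintro _ ⟨σ', hσ', rfl⟩
  exact (guarantee_le_pay u hg hσ' hτ).trans (le_of_abs_le (abs_pay_le u hg hσ' hτ))

theorem gameVal_le [Nonempty I] {u : K × C × D → ℝ} {b : ℝ}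
    (h : ∀ σ : C → I → ℝ, IsKernel σ → guarantee u g σ ≤ b) : gameVal u g ≤ b := by
  classical
  refine csSup_le ⟨_, _, isKernel_pureKernel fun _ => Classical.arbitrary I, rfl⟩ ?_
  rintro _ ⟨σ, hσ, rfl⟩
  exact h σ hσ

theorem gameVal_le_add_l1 [Nonempty I] [Nonempty J] (u w : K × C × D → ℝ) (hg : Bounded1 g) :
    gameVal u g ≤ gameVal w g + l1 u w := by
  refine gameVal_le fun σ hσ => ?_
  rw [← sub_le_iff_le_add]
  refine (le_guarantee fun τ hτ => ?_).trans (guarantee_le_gameVal w hg hσ)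
  have := pay_sub_pay_le_l1 u w hg hσ hτ
  linarith [guarantee_le_pay u hg hσ hτ]

theorem gameVal_garbleL_le [Nonempty I] [Nonempty J] [Fintype C'] {q : C → C' → ℝ}
    (hq : IsKernel q) (u : K × C × D → ℝ) (hg : Bounded1 g) :
    gameVal (garbleL q u) g ≤ gameVal u g := by
  refine gameVal_le fun σ hσ => ?_
  have : guarantee (garbleL q u) g σ = guarantee u g fun c i => ∑ c', q c c' * σ c' i := by
    simp only [guarantee, pay_garbleL]
  exact this ▸ guarantee_le_gameVal u hg (hq.comp hσ)

theorem gameVal_le_gameVal_garbleR [Nonempty I] [Nonempty J] [Fintype D'] {q : D → D' → ℝ}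
    (hq : IsKernel q) (u : K × C × D → ℝ) (hg : Bounded1 g) :
    gameVal u g ≤ gameVal (garbleR q u) g := by
  refine gameVal_le fun σ hσ => (le_guarantee fun τ hτ => ?_).trans
    (guarantee_le_gameVal _ hg hσ)
  rw [pay_garbleR]
  exact guarantee_le_pay u hg hσ (hq.comp hτ)

theorem gameVal_sub_gameVal_le_l1_garble [Nonempty I] [Nonempty J] [Fintype C'] [Fintype D']
    {u : K × C × D → ℝ} {v : K × C' × D' → ℝ} {q₁ : C → C' → ℝ} {q₂ : D' → D → ℝ}
    (hq₁ : IsKernel q₁) (hq₂ : IsKernel q₂) (hg : Bounded1 g) :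
    gameVal v g - gameVal u g ≤ l1 (garbleL q₁ u) (garbleR q₂ v) := by
  have h₁ := gameVal_garbleL_le hq₁ u hg
  have h₂ := gameVal_le_gameVal_garbleR hq₂ v hg
  have h₃ := gameVal_le_add_l1 (garbleR q₂ v) (garbleL q₁ u) hg
  have h₄ : l1 (garbleR q₂ v) (garbleL q₁ u) = l1 (garbleL q₁ u) (garbleR q₂ v) :=
    sum_congr rfl fun _ _ => abs_sub_comm _ _
  linarith

end Value

theorem Convex.exists_abs_le_one_forall_le_sum_mul {ι : Type*} [Fintype ι] {W : Set (ι → ℝ)}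
    (hW : Convex ℝ W) {α : ℝ} (hα : ∀ w ∈ W, α ≤ ∑ i, |w i|) :
    ∃ φ : ι → ℝ, (∀ i, |φ i| ≤ 1) ∧ ∀ w ∈ W, α ≤ ∑ i, φ i * w i := by
  classical
  rcases le_or_gt α 0 with hα0 | hα0
  · exact ⟨0, by simp, fun _ _ => by simpa using hα0⟩
  set B : Set (ι → ℝ) := {z | ∑ i, |z i| < α}
  have hBopen : IsOpen B :=
    isOpen_Iio.preimage (continuous_finsetSum _ fun i _ => (continuous_apply i).abs)
  have hBconv : Convex ℝ B := by
    intro z hz z' hz' a b ha hb hab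
    refine lt_of_le_of_lt ?_ (Set.mem_Iio.mp (convex_Iio α hz hz' ha hb hab))
    simp only [smul_eq_mul, mul_sum, ← sum_add_distrib]
    refine sum_le_sum fun i _ => ?_
    simpa [abs_mul, abs_of_nonneg ha, abs_of_nonneg hb] using abs_add_le (a * z i) (b * z' i)
  have hdisj : Disjoint B W :=
    Set.disjoint_left.mpr fun z hzB hzW => (hα z hzW).not_gt hzB
  obtain ⟨f, t, hfB, hfW⟩ := geometric_hahn_banach_open hBconv hBopen hW hdisj
  have ht : 0 < t := by simpa using hfB 0 (by simpa [B] using hα0)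
  set e : ι → ι → ℝ := fun i j => if i = j then 1 else 0
  -- test `f` on `± r • e i`, whose ℓ¹ norm is `r < α`
  have hfe : ∀ i, α * |f (e i)| ≤ t := by
    intro i
    have hlt : ∀ r, 0 ≤ r → r < α → r * |f (e i)| < t := by
      intro r hr0 hrα
      have hmem : ∀ ε : ℝ, |ε| = 1 → (ε * r) • e i ∈ B := fun ε hε => by
        simpa [B, e, apply_ite abs, abs_mul, hε, abs_of_nonneg hr0] using hrα
      have h1 := hfB _ (hmem 1 (by simp))
      have h2 := hfB _ (hmem (-1) (by simp))
      simp only [map_smul, smul_eq_mul] at h1 h2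
      rw [mul_comm, ← abs_of_nonneg hr0, ← abs_mul]
      exact abs_lt.mpr ⟨by linarith, by linarith⟩
    rcases (abs_nonneg (f (e i))).eq_or_lt with h0 | h0
    · rw [← h0, mul_zero]; exact ht.le
    · rw [← le_div_iff₀ h0]
      refine le_of_forall_lt fun r hr => ?_
      rcases lt_or_ge r 0 with hr0 | hr0
      · exact hr0.trans (div_pos ht h0)
      · exact (lt_div_iff₀ h0).mpr (hlt r hr0 hr)
  refine ⟨fun i => α / t * f (e i), fun i => ?_, fun w hw => ?_⟩
  · rw [abs_mul, abs_of_pos (div_pos hα0 ht), div_mul_eq_mul_div, div_le_one ht]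
    exact hfe i
  · have hfw : f w = ∑ i, w i * f (e i) := by
      simpa using f.toLinearMap.pi_apply_eq_sum_univ w
    calc α = α / t * t := by field_simp
      _ ≤ α / t * f w := mul_le_mul_of_nonneg_left (hfW w hw) (div_pos hα0 ht).le
      _ = ∑ i, α / t * f (e i) * w i := by
        rw [hfw, mul_sum]; exact sum_congr rfl fun i _ => by ring

def garbleDiff {K C D C' D' : Type*} [Fintype C] [Fintype D'] (u : K × C × D → ℝ)
    (v : K × C' × D' → ℝ) : (C → C' → ℝ) × (D' → D → ℝ) →ₗ[ℝ] K × C' × D → ℝ where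
  toFun q := garbleL q.1 u - garbleR q.2 v
  map_add' q q' := by
    ext
    simp only [garbleL, garbleR, Prod.fst_add, Prod.snd_add, Pi.add_apply, Pi.sub_apply, mul_add,
      sum_add_distrib]
    ring
  map_smul' a q := by
    ext
    simp only [garbleL, garbleR, Prod.smul_fst, Prod.smul_snd, Pi.smul_apply, Pi.sub_apply,
      smul_eq_mul, RingHom.id_apply, mul_sub, mul_sum, mul_left_comm]

section Garbling

variable {K C D C' D' : Type*} [Fintype K] [Fintype C] [Fintype D] [Fintype C'] [Fintype D']

theorem exists_isKernel_l1_garble_le [Nonempty C'] [Nonempty D] (u : K × C × D → ℝ)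
    (v : K × C' × D' → ℝ) :
    ∃ (q₁ : C → C' → ℝ) (q₂ : D' → D → ℝ), IsKernel q₁ ∧ IsKernel q₂ ∧
      ∀ (q₁' : C → C' → ℝ) (q₂' : D' → D → ℝ), IsKernel q₁' → IsKernel q₂' →
        l1 (garbleL q₁ u) (garbleR q₂ v) ≤ l1 (garbleL q₁' u) (garbleR q₂' v) := by
  classical
  have hcont : Continuous fun q => ∑ s, |garbleDiff u v q s| :=
    continuous_finsetSum _ fun s _ =>
      ((continuous_apply s).comp (garbleDiff u v).continuous_of_finiteDimensional).abs
  obtain ⟨q, ⟨hq₁, hq₂⟩, hmin⟩ :=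
    ((isCompact_setOf_isKernel C C').prod (isCompact_setOf_isKernel D' D)).exists_isMinOn
      ⟨(_, _), isKernel_pureKernel fun _ => Classical.arbitrary C',
        isKernel_pureKernel fun _ => Classical.arbitrary D⟩ hcont.continuousOn
  exact ⟨q.1, q.2, hq₁, hq₂, fun q₁' q₂' h₁ h₂ => hmin (a := (q₁', q₂')) ⟨h₁, h₂⟩⟩

theorem exists_abs_le_one_le_sum_mul_garble (u : K × C × D → ℝ) (v : K × C' × D' → ℝ) {α : ℝ}
    (hα : ∀ (q₁ : C → C' → ℝ) (q₂ : D' → D → ℝ), IsKernel q₁ → IsKernel q₂ →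
      α ≤ l1 (garbleL q₁ u) (garbleR q₂ v)) :
    ∃ φ : K × C' × D → ℝ, (∀ s, |φ s| ≤ 1) ∧
      ∀ (q₁ : C → C' → ℝ) (q₂ : D' → D → ℝ), IsKernel q₁ → IsKernel q₂ →
        α ≤ ∑ s, φ s * (garbleL q₁ u s - garbleR q₂ v s) := by
  have hW := ((convex_setOf_isKernel C C').prod (convex_setOf_isKernel D' D)).linear_image
    (garbleDiff u v)
  obtain ⟨φ, hφ, hαφ⟩ := hW.exists_abs_le_one_forall_le_sum_mul (α := α) <| by
    rintro _ ⟨⟨q₁, q₂⟩, ⟨h₁, h₂⟩, rfl⟩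
    exact hα q₁ q₂ h₁ h₂
  exact ⟨φ, hφ, fun q₁ q₂ h₁ h₂ => hαφ _ ⟨(q₁, q₂), ⟨h₁, h₂⟩, rfl⟩⟩

end Garbling

section Pure

variable {K C D C' D' I J : Type*} [Fintype K] [Fintype C] [Fintype D] [Fintype I] [Fintype J]
  [Fintype C'] [Fintype D'] {g : K → I → J → ℝ}

theorem sum_mul_garbleL (φ : K × C' × D → ℝ) (q : C → C' → ℝ) (u : K × C × D → ℝ) :
    ∑ s, φ s * garbleL q u s = ∑ c, ∑ k, ∑ d, u (k, c, d) * ∑ c', q c c' * φ (k, c', d) := by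
  simp only [garbleL, mul_sum, ← Fintype.sum_prod_type']
  exact Fintype.sum_equiv ⟨fun x => (x.2, x.1.1, x.1.2.2, x.1.2.1),
    fun y => ((y.2.1, y.2.2.2, y.2.2.1), y.1), fun _ => rfl, fun _ => rfl⟩ _ _
    fun _ => by simp only [Equiv.coe_fn_mk]; ring

theorem sum_mul_garbleR (φ : K × C × D' → ℝ) (q : D → D' → ℝ) (u : K × C × D → ℝ) :
    ∑ s, φ s * garbleR q u s = ∑ d, ∑ k, ∑ c, u (k, c, d) * ∑ d', q d d' * φ (k, c, d') := by
  simp only [garbleR, mul_sum, ← Fintype.sum_prod_type']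
  exact Fintype.sum_equiv ⟨fun x => (x.2, x.1.1, x.1.2.1, x.1.2.2),
    fun y => ((y.2.1, y.2.2.1, y.2.2.2), y.1), fun _ => rfl, fun _ => rfl⟩ _ _
    fun _ => by simp only [Equiv.coe_fn_mk]; ring

theorem gameVal_le_of_pure [Nonempty I] [DecidableEq J] (u : K × C × D → ℝ) (hg : Bounded1 g)
    (f : D → J) {B : C → ℝ} (hB : ∀ c i, ∑ k, ∑ d, u (k, c, d) * g k i (f d) ≤ B c) :
    gameVal u g ≤ ∑ c, B c := by
  refine gameVal_le fun σ hσ => (guarantee_le_pay u hg hσ (isKernel_pureKernel f)).trans ?_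
  rw [pay_eq_sum_sum_mul_left]
  refine sum_le_sum fun c _ => (hσ c).sum_mul_le fun i => ?_
  simpa [mul_assoc, ← mul_sum, sum_pureKernel_mul] using hB c i

theorem le_gameVal_of_pure [Nonempty J] [DecidableEq I] (u : K × C × D → ℝ) (hg : Bounded1 g)
    (f : C → I) {B : D → ℝ} (hB : ∀ d j, B d ≤ ∑ k, ∑ c, u (k, c, d) * g k (f c) j) :
    ∑ d, B d ≤ gameVal u g := by
  refine le_trans ?_ (guarantee_le_gameVal u hg (isKernel_pureKernel f))
  refine le_guarantee fun τ hτ => ?_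
  rw [pay_eq_sum_sum_mul_right]
  refine sum_le_sum fun d _ => (hτ d).le_sum_mul fun j => ?_
  simpa [mul_assoc, mul_left_comm, ← mul_sum, sum_pureKernel_mul] using hB d j

theorem sum_mul_garbleL_pureKernel [DecidableEq C'] (φ : K × C' × D → ℝ) (f : C → C')
    (u : K × C × D → ℝ) :
    ∑ s, φ s * garbleL (pureKernel f) u s = ∑ c, ∑ k, ∑ d, u (k, c, d) * φ (k, f c, d) := by
  simp [sum_mul_garbleL, sum_pureKernel_mul]

theorem sum_mul_garbleR_pureKernel [DecidableEq D] (φ : K × C' × D → ℝ) (f : D' → D)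
    (v : K × C' × D' → ℝ) :
    ∑ s, φ s * garbleR (pureKernel f) v s = ∑ d', ∑ k, ∑ c', v (k, c', d') * φ (k, c', f d') := by
  simp [sum_mul_garbleR, sum_pureKernel_mul]

theorem exists_game_sum_mul_garble_pure_le_gameVal_sub [Nonempty C'] [Nonempty D]
    [DecidableEq C'] [DecidableEq D]
    (u : K × C × D → ℝ) (v : K × C' × D' → ℝ) {φ : K × C' × D → ℝ} (hφ : ∀ s, |φ s| ≤ 1)
    (eI : C' ≃ I) (eJ : D ≃ J) :
    ∃ g : K → I → J → ℝ, Bounded1 g ∧ ∃ (f₁ : C → C') (f₂ : D' → D),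
      ∑ s, φ s * (garbleL (pureKernel f₁) u s - garbleR (pureKernel f₂) v s) ≤
        gameVal v g - gameVal u g := by
  classical
  have : Nonempty I := eI.symm.nonempty
  have : Nonempty J := eJ.symm.nonempty
  set g : K → I → J → ℝ := fun k i j => -φ (k, eI.symm i, eJ.symm j)
  have hg : Bounded1 g := fun k i j => by simpa [g] using hφ _
  choose f₁ hf₁ using fun c => Finite.exists_min fun c' => ∑ k, ∑ d, u (k, c, d) * φ (k, c', d)
  choose f₂ hf₂ using fun d' => Finite.exists_max fun d => ∑ k, ∑ c', v (k, c', d') * φ (k, c', d)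
  -- in `Γ(u,g)` player 2 announces his signal, in `Γ(v,g)` player 1 does
  have hu : gameVal u g ≤ ∑ c, -∑ k, ∑ d, u (k, c, d) * φ (k, f₁ c, d) :=
    gameVal_le_of_pure u hg eJ fun c i => by simpa [g] using hf₁ c (eI.symm i)
  have hv : ∑ d', -∑ k, ∑ c', v (k, c', d') * φ (k, c', f₂ d') ≤ gameVal v g :=
    le_gameVal_of_pure v hg eI fun d' j => by simpa [g] using hf₂ d' (eJ.symm j)
  refine ⟨g, hg, f₁, f₂, ?_⟩
  simp only [mul_sub, sum_sub_distrib, sum_mul_garbleL_pureKernel, sum_mul_garbleR_pureKernel]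
  simp only [sum_neg_distrib] at hu hv
  linarith

end Pure

theorem exists_game_le_gameVal_sub {K C D C' D' I J : Type*} [Fintype K] [Fintype C] [Fintype D]
    [Fintype C'] [Fintype D'] [Fintype I] [Fintype J] [Nonempty C'] [Nonempty D]
    (u : K × C × D → ℝ) (v : K × C' × D' → ℝ) (eI : C' ≃ I) (eJ : D ≃ J) {α : ℝ}
    (hα : ∀ (q₁ : C → C' → ℝ) (q₂ : D' → D → ℝ), IsKernel q₁ → IsKernel q₂ →
      α ≤ l1 (garbleL q₁ u) (garbleR q₂ v)) :
    ∃ g : K → I → J → ℝ, Bounded1 g ∧ α ≤ gameVal v g - gameVal u g := by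
  classical
  obtain ⟨φ, hφ, hαφ⟩ := exists_abs_le_one_le_sum_mul_garble u v hα
  obtain ⟨g, hg, f₁, f₂, hfg⟩ := exists_game_sum_mul_garble_pure_le_gameVal_sub u v hφ eI eJ
  exact ⟨g, hg, (hαφ _ _ (isKernel_pureKernel f₁) (isKernel_pureKernel f₂)).trans hfg⟩

theorem exists_equiv_fin_succ (α : Type*) [Fintype α] [Nonempty α] :
    ∃ m, m + 1 = Fintype.card α ∧ Nonempty (α ≃ Fin (m + 1)) :=
  ⟨Fintype.card α - 1, Nat.sub_add_cancel Fintype.card_pos,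
    ⟨Fintype.equivFinOfCardEq (Nat.sub_add_cancel Fintype.card_pos).symm⟩⟩

theorem stmt1_general {K C D : Type*} [Fintype K] [Fintype C] [Fintype D]
    (L : ℕ) (hC : Fintype.card C ≤ L) (hD : Fintype.card D ≤ L)
    (u v : K × C × D → ℝ) (hu : IsDist u) :
    ∃ (q₁ : C → C → ℝ) (q₂ : D → D → ℝ), IsKernel q₁ ∧ IsKernel q₂ ∧
      (∀ (q₁' : C → C → ℝ) (q₂' : D → D → ℝ), IsKernel q₁' → IsKernel q₂' →
        l1 (garbleL q₁ u) (garbleR q₂ v) ≤ l1 (garbleL q₁' u) (garbleR q₂' v)) ∧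
      IsLUB {x : ℝ | ∃ m n : ℕ, m + 1 ≤ L ∧ n + 1 ≤ L ∧
          ∃ g : K → Fin (m + 1) → Fin (n + 1) → ℝ, Bounded1 g ∧
            x = gameVal v g - gameVal u g}
        (l1 (garbleL q₁ u) (garbleR q₂ v)) := by
  obtain ⟨_, c, d⟩ := hu.nonempty
  have : Nonempty C := ⟨c⟩
  have : Nonempty D := ⟨d⟩
  obtain ⟨q₁, q₂, hq₁, hq₂, hmin⟩ := exists_isKernel_l1_garble_le u v
  refine ⟨q₁, q₂, hq₁, hq₂, hmin, ?_, fun b hb => ?_⟩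
  · rintro _ ⟨m, n, -, -, g, hg, rfl⟩
    exact gameVal_sub_gameVal_le_l1_garble hq₁ hq₂ hg
  · obtain ⟨m, hm, ⟨eC⟩⟩ := exists_equiv_fin_succ C
    obtain ⟨n, hn, ⟨eD⟩⟩ := exists_equiv_fin_succ D
    obtain ⟨g, hg, hα⟩ := exists_game_le_gameVal_sub u v eC eD hmin
    exact hα.trans (hb ⟨m, n, hm ▸ hC, hn ▸ hD, g, hg, rfl⟩)

theorem stmt1 {K C D : Type*} [Fintype K] [Fintype C] [Fintype D]
    (L : ℕ) (hL : 1 ≤ L) (hC : Fintype.card C ≤ L) (hD : Fintype.card D ≤ L)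
    (u v : K × C × D → ℝ) (hu : IsDist u) (hv : IsDist v) :
    ∃ (q₁ : C → C → ℝ) (q₂ : D → D → ℝ), IsKernel q₁ ∧ IsKernel q₂ ∧
      (∀ (q₁' : C → C → ℝ) (q₂' : D → D → ℝ), IsKernel q₁' → IsKernel q₂' →
        l1 (garbleL q₁ u) (garbleR q₂ v) ≤ l1 (garbleL q₁' u) (garbleR q₂' v)) ∧
      IsLUB {x : ℝ | ∃ m n : ℕ, m + 1 ≤ L ∧ n + 1 ≤ L ∧
          ∃ g : K → Fin (m + 1) → Fin (n + 1) → ℝ, Bounded1 g ∧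
            x = gameVal v g - gameVal u g}
        (l1 (garbleL q₁ u) (garbleR q₂ v)) :=
  stmt1_general L hC hD u v hu
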